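/- Let 0 < c < 1, h a nonzero integer, and Q a positive integer. Then |∑_{n=1}^M e(h((n+1)^c − n^c)) − ∑_{n=1}^M e(c h n^{c−1})| ≪ |h| + M/2^{Q+1}, where the dyadic decomposition into intervals (M/2^{q+1}, M/2^q], 0 ≤ q ≤ Q, is used and e(x) = exp(2πi x). -/

import Mathlib

open Finset

noncomputable def e (x : ℝ) : ℂ := Complex.exp (2 * Real.pi * Complex.I * x)

private lemma rpow_mvt (p a b : ℝ) (ha : 0 < a) (hab : a < b) :
    ∃ ξ ∈ Set.Ioo a b, b ^ p - a ^ p = p * ξ ^ (p - 1) * (b - a) := by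
  obtain ⟨ξ, hξ, hs⟩ := exists_hasDerivAt_eq_slope (fun x => x ^ p)
    (fun x => p * x ^ (p - 1)) hab
    (fun x hx => (Real.continuousAt_rpow_const x p
      (Or.inl (ne_of_gt (lt_of_lt_of_le ha hx.1)))).continuousWithinAt)
    (fun x hx => Real.hasDerivAt_rpow_const (Or.inl (ne_of_gt (ha.trans hx.1))))
  refine ⟨ξ, hξ, ?_⟩
  have hba : b - a ≠ 0 := sub_ne_zero.mpr hab.ne'
  field_simp at hs
  linarith [hs]

private lemma taylor_bound {c : ℝ} (hc0 : 0 < c) (hc1 : c < 1) (x : ℝ) (hx : 1 ≤ x) :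
    |(x + 1) ^ c - x ^ c - c * x ^ (c - 1)| ≤ x ^ (c - 2) := by
  have hx0 : (0:ℝ) < x := lt_of_lt_of_le one_pos hx
  obtain ⟨ξ, hξ, h1⟩ := rpow_mvt c x (x + 1) hx0 (by linarith)
  obtain ⟨η, hη, h2⟩ := rpow_mvt (c - 1) x ξ hx0 hξ.1
  rw [show c - 1 - 1 = c - 2 by ring] at h2
  have hηx : η ^ (c - 2) ≤ x ^ (c - 2) :=
    Real.rpow_le_rpow_of_nonpos hx0 hη.1.le (by linarith)
  have hηpos : (0:ℝ) < η ^ (c - 2) := Real.rpow_pos_of_pos (hx0.trans hη.1) _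
  have hspos : (0:ℝ) < x ^ (c - 2) := Real.rpow_pos_of_pos hx0 _
  have key : (x + 1) ^ c - x ^ c - c * x ^ (c - 1)
      = c * (c - 1) * η ^ (c - 2) * (ξ - x) := by
    rw [show (x + 1) - x = (1:ℝ) by ring, mul_one] at h1
    nlinarith [h2, h1]
  rw [key]
  have h3 : (0:ℝ) < ξ - x := by linarith [hξ.1]
  have h4 : ξ - x ≤ 1 := by linarith [hξ.2]
  have h5 : (0:ℝ) ≤ c * (1 - c) := by nlinarith
  have hu : (0:ℝ) ≤ η ^ (c - 2) * (ξ - x) := mul_nonneg hηpos.le h3.le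
  have hnp : c * (c - 1) * η ^ (c - 2) * (ξ - x) ≤ 0 := by
    nlinarith [mul_nonneg h5 hu]
  rw [abs_of_nonpos hnp]
  have hus : η ^ (c - 2) * (ξ - x) ≤ x ^ (c - 2) := by
    calc η ^ (c - 2) * (ξ - x) ≤ x ^ (c - 2) * 1 :=
          mul_le_mul hηx h4 h3.le hspos.le
      _ = x ^ (c - 2) := mul_one _
  have hcc : c * (1 - c) ≤ 1 := by nlinarith [sq_nonneg (c - 1/2)]
  nlinarith [mul_le_mul_of_nonneg_right hcc hu, mul_nonneg h5 hu, hus]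

private lemma telescope_bound {c : ℝ} (hc0 : 0 < c) (hc1 : c < 1) (x : ℝ) (hx : 1 ≤ x) :
    (1 - c) * (x + 1) ^ (c - 2) ≤ x ^ (c - 1) - (x + 1) ^ (c - 1) := by
  have hx0 : (0:ℝ) < x := lt_of_lt_of_le one_pos hx
  obtain ⟨ξ, hξ, h1⟩ := rpow_mvt (c - 1) x (x + 1) hx0 (by linarith)
  have hξx : (x + 1) ^ (c - 1 - 1) ≤ ξ ^ (c - 1 - 1) :=
    Real.rpow_le_rpow_of_nonpos (hx0.trans hξ.1) hξ.2.le (by linarith)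
  rw [show c - 1 - 1 = c - 2 by ring] at hξx h1
  rw [show (x + 1) - x = (1:ℝ) by ring, mul_one] at h1
  nlinarith [hξx]

private lemma sum_bound {c : ℝ} (hc0 : 0 < c) (hc1 : c < 1) (M : ℕ) :
    (1 - c) * ∑ n ∈ Finset.Icc 1 M, (n : ℝ) ^ (c - 2) ≤ 2 - c - (M : ℝ) ^ (c - 1) := by
  induction M with
  | zero =>
      simp [Real.zero_rpow (by linarith : c - 1 ≠ 0)]
      linarith
  | succ M ih =>
      rw [Finset.sum_Icc_succ_top (Nat.one_le_iff_ne_zero.mpr (Nat.succ_ne_zero M))]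
      rcases Nat.eq_zero_or_pos M with hM | hM
      · subst hM
        simp [Real.one_rpow]
        linarith
      · have hM1 : (1:ℝ) ≤ (M:ℝ) := by exact_mod_cast hM
        have ht := telescope_bound hc0 hc1 (M:ℝ) hM1
        push_cast
        nlinarith [ht, ih]

private lemma e_diff (x y : ℝ) : ‖e x - e y‖ ≤ 4 * Real.pi * |x - y| := by
  have habs : ∀ t : ℝ, ‖e t‖ = 1 := by
    intro t
    rw [e, Complex.norm_exp]
    norm_num [Complex.mul_re, Complex.mul_im]
  have harg : 2 * (Real.pi:ℂ) * Complex.I * (y:ℂ) + 2 * (Real.pi:ℂ) * Complex.I * ((x - y : ℝ):ℂ)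
      = 2 * (Real.pi:ℂ) * Complex.I * (x:ℂ) := by push_cast; ring
  have hfac : e x - e y = e y * (e (x - y) - 1) := by
    rw [e, e, e, mul_sub, mul_one, ← Complex.exp_add, harg]
  rw [hfac, norm_mul, habs, one_mul]
  have hz : ‖(2 * Real.pi * Complex.I * ((x - y : ℝ) : ℂ))‖ = 2 * Real.pi * |x - y| := by
    rw [norm_mul, norm_mul, norm_mul, Complex.norm_two, Complex.norm_real, Complex.norm_I,
      Complex.norm_real, Real.norm_eq_abs, Real.norm_eq_abs, abs_of_nonneg Real.pi_pos.le]
    ring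
  rcases le_or_gt ‖(2 * Real.pi * Complex.I * ((x - y : ℝ) : ℂ))‖ 1 with hle | hlt
  · have := Complex.norm_exp_sub_one_le hle
    rw [hz] at this
    calc ‖e (x - y) - 1‖ ≤ 2 * (2 * Real.pi * |x - y|) := this
      _ = 4 * Real.pi * |x - y| := by ring
  · rw [hz] at hlt
    calc ‖e (x - y) - 1‖ ≤ ‖e (x - y)‖ + 1 := by
          simpa using (norm_sub_le (e (x - y)) 1)
      _ = 2 := by rw [habs]; norm_num
      _ ≤ 4 * Real.pi * |x - y| := by nlinarith [hlt]

theorem stmt_16 (c : ℝ) (hc0 : 0 < c) (hc1 : c < 1) :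
    ∃ C : ℝ, 0 < C ∧ ∀ (h : ℤ), h ≠ 0 → ∀ M Q : ℕ, 1 ≤ M → 1 ≤ Q →
      ‖(∑ n ∈ Finset.Icc 1 M, e ((h : ℝ) * (((n : ℝ) + 1) ^ c - (n : ℝ) ^ c)) -
            ∑ n ∈ Finset.Icc 1 M, e (c * (h : ℝ) * (n : ℝ) ^ (c - 1)))‖
        ≤ C * (|(h : ℝ)| + (M : ℝ) / 2 ^ (Q + 1)) := by
  have hπ : (0:ℝ) < Real.pi := Real.pi_pos
  refine ⟨4 * Real.pi * ((2 - c) / (1 - c)),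
    mul_pos (by positivity) (div_pos (by linarith) (by linarith)), ?_⟩
  intro h hh M Q hM hQ
  have hS : ∑ n ∈ Finset.Icc 1 M, (n : ℝ) ^ (c - 2) ≤ (2 - c) / (1 - c) := by
    have h1 := sum_bound hc0 hc1 M
    have h2 : (0:ℝ) ≤ (M : ℝ) ^ (c - 1) := Real.rpow_nonneg (Nat.cast_nonneg M) _
    rw [le_div_iff₀ (by linarith), mul_comm]
    linarith
  have key : ‖(∑ n ∈ Finset.Icc 1 M, e ((h : ℝ) * (((n : ℝ) + 1) ^ c - (n : ℝ) ^ c)) -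
        ∑ n ∈ Finset.Icc 1 M, e (c * (h : ℝ) * (n : ℝ) ^ (c - 1)))‖
      ≤ ∑ n ∈ Finset.Icc 1 M, 4 * Real.pi * |(h:ℝ)| * (n : ℝ) ^ (c - 2) := by
    rw [← Finset.sum_sub_distrib]
    refine (norm_sum_le _ _).trans (Finset.sum_le_sum ?_)
    intro n hn
    have hn1 : 1 ≤ n := (Finset.mem_Icc.mp hn).1
    have hn1' : (1:ℝ) ≤ (n:ℝ) := by exact_mod_cast hn1
    calc ‖e ((h : ℝ) * (((n : ℝ) + 1) ^ c - (n : ℝ) ^ c))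
            - e (c * (h : ℝ) * (n : ℝ) ^ (c - 1))‖
        ≤ 4 * Real.pi * |(h : ℝ) * (((n : ℝ) + 1) ^ c - (n : ℝ) ^ c)
            - c * (h : ℝ) * (n : ℝ) ^ (c - 1)| := e_diff _ _
      _ = 4 * Real.pi * (|(h:ℝ)| * |((n : ℝ) + 1) ^ c - (n : ℝ) ^ c - c * (n : ℝ) ^ (c - 1)|) := by
          rw [← abs_mul]; ring_nf
      _ ≤ 4 * Real.pi * |(h:ℝ)| * (n : ℝ) ^ (c - 2) := by
          have := taylor_bound hc0 hc1 (n:ℝ) hn1'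
          have hha : (0:ℝ) ≤ |(h:ℝ)| := abs_nonneg _
          rw [mul_assoc (4 * Real.pi)]
          exact mul_le_mul_of_nonneg_left (mul_le_mul_of_nonneg_left this hha) (by positivity)
  rw [← Finset.mul_sum] at key
  have hpos : (0:ℝ) ≤ (M : ℝ) / 2 ^ (Q + 1) := by positivity
  calc ‖_‖ ≤ 4 * Real.pi * |(h:ℝ)| * ∑ n ∈ Finset.Icc 1 M, (n : ℝ) ^ (c - 2) := key
    _ ≤ 4 * Real.pi * |(h:ℝ)| * ((2 - c) / (1 - c)) := by
        exact mul_le_mul_of_nonneg_left hS (by positivity)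
    _ ≤ 4 * Real.pi * ((2 - c) / (1 - c)) * (|(h:ℝ)| + (M : ℝ) / 2 ^ (Q + 1)) := by
        have hd : (0:ℝ) ≤ (2 - c) / (1 - c) :=
          (div_pos (by linarith) (by linarith)).le
        nlinarith [mul_nonneg (mul_nonneg (by positivity : (0:ℝ) ≤ 4 * Real.pi) hd) hpos]
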